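/- (Key linear-algebra step in the proof of Lemma 9) Let A be a real 3×3 matrix, λ₁, λ₂, λ₃ ∈ ℝ and r₁, r₂, r₃ ∈ ℝ³ linearly independent vectors with A·rᵢ = λᵢ·rᵢ for i = 1, 2, 3. Assume λ₁ ≠ 0, λ₁ ≠ λ₂ and λ₁ ≠ λ₃. Then the real 4×4 matrix P given in block form by P = [[r₁, λ₁·𝟙₃ − A], [2λ₁·‖r₁‖², 2λ₁²·r₁ᵀ]] — i.e., the first column of P is (r₁, 2λ₁‖r₁‖²) ∈ ℝ⁴, the top-right 3×3 block is λ₁·𝟙₃ − A, and the bottom-right 1×3 block is 2λ₁²·r₁ᵀ — is invertible. -/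

import Mathlib

open Matrix

noncomputable section

/-- The 4×4 matrix `P` of Lemma 9: its first column is `(r, 2λ‖r‖²)`, its top-right 3×3 block
is `λ·𝟙₃ − A`, and its bottom-right 1×3 block is `2λ²·rᵀ`. -/
def Pmat (A : Matrix (Fin 3) (Fin 3) ℝ) (lam : ℝ) (r : EuclideanSpace ℝ (Fin 3)) :
    Matrix (Fin 4) (Fin 4) ℝ :=
  (Matrix.fromBlocks
      (Matrix.of fun (i : Fin 3) (_ : Fin 1) => r i)
      (lam • (1 : Matrix (Fin 3) (Fin 3) ℝ) - A)
      (Matrix.of fun (_ : Fin 1) (_ : Fin 1) => 2 * lam * ‖r‖ ^ 2)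
      (Matrix.of fun (_ : Fin 1) (j : Fin 3) => 2 * lam ^ 2 * r j)).submatrix
    (finSumFinEquiv (m := 3) (n := 1)).symm (finSumFinEquiv (m := 1) (n := 3)).symm

/-- **Key linear-algebra step in the proof of Lemma 9.** If `A` has linearly independent
eigenvectors `r₁, r₂, r₃` with eigenvalues `λ₁, λ₂, λ₃`, where `λ₁ ≠ 0`, `λ₁ ≠ λ₂` and
`λ₁ ≠ λ₃`, then the 4×4 block matrix `P` built from `(A, λ₁, r₁)` is invertible. -/
theorem block_matrix_invertible (A : Matrix (Fin 3) (Fin 3) ℝ)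
    (lam₁ lam₂ lam₃ : ℝ) (r₁ r₂ r₃ : EuclideanSpace ℝ (Fin 3))
    (h_indep : LinearIndependent ℝ ![r₁, r₂, r₃])
    (h1 : (WithLp.toLp 2 (A *ᵥ r₁) : EuclideanSpace ℝ (Fin 3)) = lam₁ • r₁)
    (h2 : (WithLp.toLp 2 (A *ᵥ r₂) : EuclideanSpace ℝ (Fin 3)) = lam₂ • r₂)
    (h3 : (WithLp.toLp 2 (A *ᵥ r₃) : EuclideanSpace ℝ (Fin 3)) = lam₃ • r₃)
    (hlam₁ : lam₁ ≠ 0) (h12 : lam₁ ≠ lam₂) (h13 : lam₁ ≠ lam₃) :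
    IsUnit (Pmat A lam₁ r₁) := by
  have key : ∀ v : Fin 4 → ℝ, (Pmat A lam₁ r₁) *ᵥ v = 0 → v = 0 := by
    intro v hv
    set e₁ := finSumFinEquiv (m := 3) (n := 1)
    set e₂ := finSumFinEquiv (m := 1) (n := 3)
    rw [Pmat, Matrix.submatrix_mulVec_equiv] at hv
    have hv' : (Matrix.fromBlocks
        (Matrix.of fun (i : Fin 3) (_ : Fin 1) => r₁ i)
        (lam₁ • (1 : Matrix (Fin 3) (Fin 3) ℝ) - A)
        (Matrix.of fun (_ : Fin 1) (_ : Fin 1) => 2 * lam₁ * ‖r₁‖ ^ 2)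
        (Matrix.of fun (_ : Fin 1) (j : Fin 3) => 2 * lam₁ ^ 2 * r₁ j)) *ᵥ
        (v ∘ (e₂.symm).symm) = 0 := by
      funext i
      have := congrFun hv (e₁ i)
      simpa [e₁, e₂] using this
    rw [Matrix.fromBlocks_mulVec] at hv'
    -- scalar form of the top three rows
    have htop : ∀ k : Fin 3, r₁ k * v (e₂ (Sum.inl 0)) +
        ∑ l : Fin 3, (lam₁ • (1 : Matrix (Fin 3) (Fin 3) ℝ) - A) k l * v (e₂ (Sum.inr l))
          = 0 := by
      intro k
      have h := congrFun hv' (Sum.inl k)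
      simpa [Matrix.mulVec, dotProduct] using h
    have hsub : ∀ k : Fin 3,
        ∑ l : Fin 3, (lam₁ • (1 : Matrix (Fin 3) (Fin 3) ℝ) - A) k l * v (e₂ (Sum.inr l))
          = lam₁ * v (e₂ (Sum.inr k)) - ∑ l : Fin 3, A k l * v (e₂ (Sum.inr l)) := by
      intro k
      simp [Matrix.sub_apply, Matrix.smul_apply, Matrix.one_apply, sub_mul, ite_mul,
        Finset.sum_sub_distrib]
    -- scalar form of the bottom row
    have hbot : 2 * lam₁ * ‖r₁‖ ^ 2 * v (e₂ (Sum.inl 0)) +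
        ∑ j : Fin 3, 2 * lam₁ ^ 2 * r₁ j * v (e₂ (Sum.inr j)) = 0 := by
      have h := congrFun hv' (Sum.inr 0)
      simpa [Matrix.mulVec, dotProduct] using h
    -- expand x in the eigenbasis
    set x : EuclideanSpace ℝ (Fin 3) := WithLp.toLp 2 (fun l => v (e₂ (Sum.inr l))) with hxdef
    have hcard : Fintype.card (Fin 3) = Module.finrank ℝ (EuclideanSpace ℝ (Fin 3)) := by
      simp [finrank_euclideanSpace]
    let b := basisOfLinearIndependentOfCardEqFinrank h_indep hcard
    have hb : ⇑b = ![r₁, r₂, r₃] := coe_basisOfLinearIndependentOfCardEqFinrank _ _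
    set a : Fin 3 → ℝ := fun i => b.repr x i with hadef
    have hx : x = a 0 • r₁ + a 1 • r₂ + a 2 • r₃ := by
      have h := b.sum_repr x
      rw [Fin.sum_univ_three] at h
      rw [hb] at h
      simpa using h.symm
    have hxp : ∀ l : Fin 3, v (e₂ (Sum.inr l)) = a 0 * r₁ l + a 1 * r₂ l + a 2 * r₃ l := by
      intro l
      have h := congrArg (fun y : EuclideanSpace ℝ (Fin 3) => y l) hx
      simpa [PiLp.add_apply, PiLp.smul_apply, hxdef] using h
    -- scalar form of the eigenvector equations
    have h1p : ∀ k : Fin 3, ∑ l : Fin 3, A k l * r₁ l = lam₁ * r₁ k := by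
      intro k
      have h := congrArg (fun y : EuclideanSpace ℝ (Fin 3) => y k) h1
      simpa [Matrix.mulVec, dotProduct, PiLp.smul_apply] using h
    have h2p : ∀ k : Fin 3, ∑ l : Fin 3, A k l * r₂ l = lam₂ * r₂ k := by
      intro k
      have h := congrArg (fun y : EuclideanSpace ℝ (Fin 3) => y k) h2
      simpa [Matrix.mulVec, dotProduct, PiLp.smul_apply] using h
    have h3p : ∀ k : Fin 3, ∑ l : Fin 3, A k l * r₃ l = lam₃ * r₃ k := by
      intro k
      have h := congrArg (fun y : EuclideanSpace ℝ (Fin 3) => y k) h3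
      simpa [Matrix.mulVec, dotProduct, PiLp.smul_apply] using h
    have hAxp : ∀ k : Fin 3, ∑ l : Fin 3, A k l * v (e₂ (Sum.inr l)) =
        a 0 * (lam₁ * r₁ k) + a 1 * (lam₂ * r₂ k) + a 2 * (lam₃ * r₃ k) := by
      intro k
      calc ∑ l : Fin 3, A k l * v (e₂ (Sum.inr l))
          = ∑ l : Fin 3, (a 0 * (A k l * r₁ l) + a 1 * (A k l * r₂ l)
              + a 2 * (A k l * r₃ l)) :=
            Finset.sum_congr rfl fun l _ => by rw [hxp l]; ring
        _ = a 0 * (∑ l : Fin 3, A k l * r₁ l) + a 1 * (∑ l : Fin 3, A k l * r₂ l)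
              + a 2 * (∑ l : Fin 3, A k l * r₃ l) := by
            rw [Finset.sum_add_distrib, Finset.sum_add_distrib, Finset.mul_sum,
              Finset.mul_sum, Finset.mul_sum]
        _ = a 0 * (lam₁ * r₁ k) + a 1 * (lam₂ * r₂ k) + a 2 * (lam₃ * r₃ k) := by
            rw [h1p k, h2p k, h3p k]
    -- the coefficient relation from the top rows
    have hcomb : (v (e₂ (Sum.inl 0))) • r₁ + ((lam₁ - lam₂) * a 1) • r₂
        + ((lam₁ - lam₃) * a 2) • r₃ = (0 : EuclideanSpace ℝ (Fin 3)) := by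
      ext i
      show v (e₂ (Sum.inl 0)) * r₁ i + ((lam₁ - lam₂) * a 1) * r₂ i
        + ((lam₁ - lam₃) * a 2) * r₃ i = 0
      have h := htop i
      rw [hsub i, hAxp i, hxp i] at h
      linear_combination h
    have hg := Fintype.linearIndependent_iff.mp h_indep
      ![v (e₂ (Sum.inl 0)), (lam₁ - lam₂) * a 1, (lam₁ - lam₃) * a 2]
      (by rw [Fin.sum_univ_three]; simpa using hcomb)
    have hx₀ : v (e₂ (Sum.inl 0)) = 0 := by simpa using hg 0
    have ha1 : a 1 = 0 := by
      have h := hg 1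
      simp at h
      rcases h with h | h
      · exact absurd (sub_eq_zero.mp h) h12
      · exact h
    have ha2 : a 2 = 0 := by
      have h := hg 2
      simp at h
      rcases h with h | h
      · exact absurd (sub_eq_zero.mp h) h13
      · exact h
    -- use the bottom row to get a 0 = 0
    have hxr : ∀ j : Fin 3, v (e₂ (Sum.inr j)) = a 0 * r₁ j := by
      intro j
      rw [hxp j, ha1, ha2]
      ring
    have hr₁0 : r₁ ≠ 0 := by
      have := h_indep.ne_zero 0
      simpa using this
    have hex : ∃ j, r₁ j ≠ 0 := by
      by_contra h
      push_neg at h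
      exact hr₁0 (PiLp.ext h)
    obtain ⟨j₀, hj₀⟩ := hex
    have hsum : 0 < ∑ j : Fin 3, r₁ j ^ 2 :=
      Finset.sum_pos' (fun j _ => sq_nonneg _) ⟨j₀, Finset.mem_univ j₀, by positivity⟩
    have hbot₁ : ∑ j : Fin 3, 2 * lam₁ ^ 2 * r₁ j * (a 0 * r₁ j) = 0 := by
      have h := hbot
      rw [hx₀] at h
      simp_rw [hxr] at h
      linarith [h]
    have hbot₂ : (2 * lam₁ ^ 2 * a 0) * ∑ j : Fin 3, r₁ j ^ 2 = 0 := by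
      calc (2 * lam₁ ^ 2 * a 0) * ∑ j : Fin 3, r₁ j ^ 2
          = ∑ j : Fin 3, 2 * lam₁ ^ 2 * r₁ j * (a 0 * r₁ j) := by
            rw [Finset.mul_sum]; exact Finset.sum_congr rfl fun j _ => by ring
        _ = 0 := hbot₁
    have ha0 : a 0 = 0 := by
      rcases mul_eq_zero.mp hbot₂ with h | h
      · rcases mul_eq_zero.mp h with h' | h'
        · exact absurd h' (by positivity)
        · exact h'
      · exact absurd h hsum.ne'
    -- conclude v = 0
    funext j
    obtain ⟨s, rfl⟩ : ∃ s, e₂ s = j := ⟨e₂.symm j, by simp⟩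
    cases s with
    | inl i =>
      have : i = 0 := Subsingleton.elim _ _
      subst this
      exact hx₀
    | inr l =>
      rw [hxr l, ha0, zero_mul]
      rfl
  exact Matrix.mulVec_injective_iff_isUnit.mp fun p q hpq => by
    have := key (p - q) (by rw [Matrix.mulVec_sub, hpq, sub_self])
    exact sub_eq_zero.mp this

end
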